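/- Let σ > 0, ρ ∈ [−1, 1], R₁ > 0 and R₂ > 0, and set c₁ := 1 − 2^{−2R₁} and d₂ := 2^{−2R₂}. Define V as the infimum, over all triples (ω₁, ω₂, s) ∈ ℝ × ℝ × [0, ∞) satisfying ω₂² σ² (1 − ρ² d₂ c₁) ≤ (s − ω₁² σ² c₁ − 2 ω₁ ω₂ ρ σ² c₁)(1 − d₂), of the objective σ² + s − 2 ω₁ ρ σ² c₁ − 2 ω₂ σ². Then V = σ² 2^{−2R₂} (1 − ρ² + ρ² 2^{−2R₁}). (This is the minimum second-frame distortion, without any perception constraint, for the symmetric two-frame Gauss–Markov source with per-frame variance σ² and correlation ρ, compressed at rates R₁ and R₂.) -/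

import Mathlib

open MeasureTheory

/-!
Multiplying the excess distortion by `1 - d₂` turns it into the slack of the rate constraint
plus two nonnegative squares, in `ω₁ + ρ(ω₂ - 1)` and in `ω₂ - (1 - d₂)`; the reconstruction
`ω₁ = ρ d₂`, `ω₂ = 1 - d₂` with the rate constraint tight makes all three vanish.
-/

/-- The achievable second-frame distortions, written with `S = σ²`, `c = 1 - 2^{-2R₁}` and
`d = 2^{-2R₂}`. -/
def secondFrameDistortions (S ρ c d : ℝ) : Set ℝ :=
  { v | ∃ ω₁ ω₂ s : ℝ, 0 ≤ s ∧
      ω₂ ^ 2 * S * (1 - ρ ^ 2 * d * c) ≤ (s - ω₁ ^ 2 * S * c - 2 * ω₁ * ω₂ * ρ * S * c) * (1 - d) ∧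
      v = S + s - 2 * ω₁ * ρ * S * c - 2 * ω₂ * S }

section secondFrameDistortions

variable {S ρ c d : ℝ}

theorem le_of_mem_secondFrameDistortions (hS : 0 ≤ S) (hc : 0 ≤ c) (hρc : ρ ^ 2 * c ≤ 1)
    (hd : d < 1) {v : ℝ} (hv : v ∈ secondFrameDistortions S ρ c d) :
    S * d * (1 - ρ ^ 2 * c) ≤ v := by
  obtain ⟨ω₁, ω₂, s, -, hrate, rfl⟩ := hv
  have hsos : (S + s - 2 * ω₁ * ρ * S * c - 2 * ω₂ * S - S * d * (1 - ρ ^ 2 * c)) * (1 - d)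
      = ((s - ω₁ ^ 2 * S * c - 2 * ω₁ * ω₂ * ρ * S * c) * (1 - d)
          - ω₂ ^ 2 * S * (1 - ρ ^ 2 * d * c))
        + S * (1 - d) * c * (ω₁ + ρ * (ω₂ - 1)) ^ 2
        + S * (1 - ρ ^ 2 * c) * (ω₂ - (1 - d)) ^ 2 := by ring
  have hsq₁ : 0 ≤ S * (1 - d) * c * (ω₁ + ρ * (ω₂ - 1)) ^ 2 := by
    have : 0 ≤ 1 - d := by linarith
    positivity
  have hsq₂ : 0 ≤ S * (1 - ρ ^ 2 * c) * (ω₂ - (1 - d)) ^ 2 := by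
    have : 0 ≤ 1 - ρ ^ 2 * c := by linarith
    positivity
  have hexcess : 0 ≤ (S + s - 2 * ω₁ * ρ * S * c - 2 * ω₂ * S - S * d * (1 - ρ ^ 2 * c))
      * (1 - d) := by
    rw [hsos]; linarith
  linarith [nonneg_of_mul_nonneg_left hexcess (sub_pos.mpr hd)]

theorem mem_secondFrameDistortions (hS : 0 ≤ S) (hc : 0 ≤ c) (hd₀ : 0 ≤ d) (hd₁ : d ≤ 1) :
    S * d * (1 - ρ ^ 2 * c) ∈ secondFrameDistortions S ρ c d := by
  refine ⟨ρ * d, 1 - d, S * (1 - d + ρ ^ 2 * c * d), ?_, le_of_eq ?_, by ring⟩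
  · have : 0 ≤ 1 - d := by linarith
    positivity
  · ring

theorem isLeast_secondFrameDistortions (hS : 0 ≤ S) (hc₀ : 0 ≤ c) (hρc : ρ ^ 2 * c ≤ 1)
    (hd₀ : 0 ≤ d) (hd₁ : d < 1) :
    IsLeast (secondFrameDistortions S ρ c d) (S * d * (1 - ρ ^ 2 * c)) :=
  ⟨mem_secondFrameDistortions hS hc₀ hd₀ hd₁.le,
    fun _ hv => le_of_mem_secondFrameDistortions hS hc₀ hρc hd₁ hv⟩

end secondFrameDistortions

theorem statement8 (σ ρ R₁ R₂ : ℝ) (hρ : ρ ∈ Set.Icc (-1 : ℝ) 1)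
    (hR₁ : 0 < R₁) (hR₂ : 0 < R₂) :
    sInf { v : ℝ | ∃ ω₁ ω₂ s : ℝ, 0 ≤ s ∧
        ω₂ ^ 2 * σ ^ 2 * (1 - ρ ^ 2 * (2 : ℝ) ^ (-(2 * R₂)) * (1 - (2 : ℝ) ^ (-(2 * R₁)))) ≤
          (s - ω₁ ^ 2 * σ ^ 2 * (1 - (2 : ℝ) ^ (-(2 * R₁)))
              - 2 * ω₁ * ω₂ * ρ * σ ^ 2 * (1 - (2 : ℝ) ^ (-(2 * R₁))))
            * (1 - (2 : ℝ) ^ (-(2 * R₂))) ∧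
        v = σ ^ 2 + s - 2 * ω₁ * ρ * σ ^ 2 * (1 - (2 : ℝ) ^ (-(2 * R₁))) - 2 * ω₂ * σ ^ 2 }
      = σ ^ 2 * (2 : ℝ) ^ (-(2 * R₂)) * (1 - ρ ^ 2 + ρ ^ 2 * (2 : ℝ) ^ (-(2 * R₁))) := by
  set d₁ : ℝ := (2 : ℝ) ^ (-(2 * R₁))
  set d₂ : ℝ := (2 : ℝ) ^ (-(2 * R₂))
  have hd₁₀ : 0 ≤ d₁ := by positivity
  have hd₁₁ : d₁ ≤ 1 := Real.rpow_le_one_of_one_le_of_nonpos (by norm_num) (by linarith)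
  have hd₂₁ : d₂ < 1 := Real.rpow_lt_one_of_one_lt_of_neg (by norm_num) (by linarith)
  have hρ₂ : ρ ^ 2 ≤ 1 := (sq_le_one_iff_abs_le_one ρ).mpr (abs_le.mpr hρ)
  have hρc : ρ ^ 2 * (1 - d₁) ≤ 1 := mul_le_one₀ hρ₂ (by linarith) (by linarith)
  change sInf (secondFrameDistortions (σ ^ 2) ρ (1 - d₁) d₂) = _
  rw [(isLeast_secondFrameDistortions (sq_nonneg σ) (by linarith) hρc (by positivity)
    hd₂₁).csInf_eq]
  ring
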